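/- For each z ∈ {0,1}, the bound P(Y₀ = 1) ≤ P(Y = 1 | Z = z) combined with P(Y₁ = 1) ≥ P(Y = 1 | Z = z') for each z' implies that the denominator of APCE_AH satisfies min_z P(Y=1 | Z=z) ≥ P(Y₀ = 1) ≥ max_z P(Y=1, R=0 | Z=z); hence if the numerator N := P(R=0,Y=1|Z=0) − P(R=0,Y=1|Z=1) is nonnegative and the bounds are positive, N / min_z P(Y=1|Z=z) ≤ APCE_AH ≤ N / max_z P(Y=1, R=0 | Z=z). -/
import Mathlib


open Finset
open scoped Classical

namespace PS

/-- Probability of an event `A` under weight function `p` on a finite sample space. -/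
noncomputable def Prob {Ω : Type*} [Fintype Ω] (p : Ω → ℝ) (A : Ω → Prop) : ℝ :=
  ∑ ω ∈ Finset.univ.filter A, p ω

/-- Conditional probability `P(A | B)`. -/
noncomputable def CProb {Ω : Type*} [Fintype Ω] (p : Ω → ℝ) (A B : Ω → Prop) : ℝ :=
  Prob p (fun ω => A ω ∧ B ω) / Prob p B

/-- Conditional expectation `E[f | B]`. -/
noncomputable def CExp {Ω : Type*} [Fintype Ω] (p : Ω → ℝ) (f : Ω → ℝ) (B : Ω → Prop) : ℝ :=
  (∑ ω ∈ Finset.univ.filter B, p ω * f ω) / Prob p B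

/-- Indicator of a Boolean value, as a real number. -/
def ind (b : Bool) : ℝ := if b then 1 else 0

/-- Observed recommendation `R = R_Z`. -/
def obsR {Ω : Type*} (Z R₀ R₁ : Ω → Bool) (ω : Ω) : Bool := if Z ω then R₁ ω else R₀ ω

/-- Observed outcome `Y = Y_R` (exclusion restriction). -/
def obsY {Ω : Type*} (Rv Y₀ Y₁ : Ω → Bool) (ω : Ω) : Bool := if Rv ω then Y₁ ω else Y₀ ω

/-- `Z` is independent of the vector `(R₀, R₁, Y₀, Y₁)`. -/
def IndepZ {Ω : Type*} [Fintype Ω] (p : Ω → ℝ) (Z R₀ R₁ Y₀ Y₁ : Ω → Bool) : Prop :=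
  ∀ z a b c d : Bool,
    Prob p (fun ω => Z ω = z ∧ R₀ ω = a ∧ R₁ ω = b ∧ Y₀ ω = c ∧ Y₁ ω = d) =
      Prob p (fun ω => Z ω = z) *
        Prob p (fun ω => R₀ ω = a ∧ R₁ ω = b ∧ Y₀ ω = c ∧ Y₁ ω = d)

section Aux

variable {Ω : Type*} [Fintype Ω] (p : Ω → ℝ)

lemma Prob_congr (A B : Ω → Prop) (h : ∀ ω, A ω ↔ B ω) : Prob p A = Prob p B := by
  have : A = B := funext fun ω => propext (h ω)
  rw [this]

lemma Prob_eq_sum_ite (A : Ω → Prop) : Prob p A = ∑ ω, if A ω then p ω else 0 := by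
  unfold Prob
  rw [Finset.sum_filter]

lemma Prob_mono (hp : ∀ ω, 0 ≤ p ω) (A B : Ω → Prop) (h : ∀ ω, A ω → B ω) :
    Prob p A ≤ Prob p B := by
  rw [Prob_eq_sum_ite, Prob_eq_sum_ite]
  apply Finset.sum_le_sum
  intro ω _
  by_cases hA : A ω
  · rw [if_pos hA, if_pos (h ω hA)]
  · rw [if_neg hA]
    split <;> [exact hp ω; exact le_refl 0]

lemma Prob_nonneg (hp : ∀ ω, 0 ≤ p ω) (A : Ω → Prop) : 0 ≤ Prob p A := by
  unfold Prob
  exact Finset.sum_nonneg fun ω _ => hp ω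

lemma Prob_split (A : Ω → Prop) (X : Ω → Bool) :
    Prob p A = Prob p (fun ω => A ω ∧ X ω = false) + Prob p (fun ω => A ω ∧ X ω = true) := by
  rw [Prob_eq_sum_ite, Prob_eq_sum_ite, Prob_eq_sum_ite, ← Finset.sum_add_distrib]
  apply Finset.sum_congr rfl
  intro ω _
  by_cases hA : A ω
  · cases hX : X ω <;> simp [hA, hX]
  · simp [hA]

lemma Prob_decomp (R₀ R₁ Y₀ Y₁ : Ω → Bool) (A : Ω → Prop)
    (f : Bool → Bool → Bool → Bool → Prop) :
    Prob p (fun ω => A ω ∧ f (R₀ ω) (R₁ ω) (Y₀ ω) (Y₁ ω)) =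
      ∑ v ∈ (Finset.univ : Finset (Bool × Bool × Bool × Bool)).filter
          (fun v => f v.1 v.2.1 v.2.2.1 v.2.2.2),
        Prob p (fun ω => A ω ∧ R₀ ω = v.1 ∧ R₁ ω = v.2.1 ∧ Y₀ ω = v.2.2.1 ∧ Y₁ ω = v.2.2.2) := by
  classical
  rw [Prob_eq_sum_ite]
  have hrw : ∀ v ∈ (Finset.univ : Finset (Bool × Bool × Bool × Bool)).filter
      (fun v => f v.1 v.2.1 v.2.2.1 v.2.2.2),
      Prob p (fun ω => A ω ∧ R₀ ω = v.1 ∧ R₁ ω = v.2.1 ∧ Y₀ ω = v.2.2.1 ∧ Y₁ ω = v.2.2.2) =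
      ∑ ω, if A ω ∧ ((R₀ ω, R₁ ω, Y₀ ω, Y₁ ω) : Bool × Bool × Bool × Bool) = v
        then p ω else 0 := by
    intro v _
    rw [Prob_eq_sum_ite]
    apply Finset.sum_congr rfl
    intro ω _
    congr 1
    simp [Prod.ext_iff, and_assoc]
  rw [Finset.sum_congr rfl hrw, Finset.sum_comm]
  apply Finset.sum_congr rfl
  intro ω _
  by_cases hA : A ω
  · simp only [hA, true_and]
    rw [show (∑ v ∈ (Finset.univ : Finset (Bool × Bool × Bool × Bool)).filter
        (fun v => f v.1 v.2.1 v.2.2.1 v.2.2.2),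
        if ((R₀ ω, R₁ ω, Y₀ ω, Y₁ ω) : Bool × Bool × Bool × Bool) = v then p ω else 0) =
        if ((R₀ ω, R₁ ω, Y₀ ω, Y₁ ω) : Bool × Bool × Bool × Bool) ∈
          (Finset.univ : Finset (Bool × Bool × Bool × Bool)).filter
            (fun v => f v.1 v.2.1 v.2.2.1 v.2.2.2) then p ω else 0 from
      Finset.sum_ite_eq _ _ _]
    simp
  · simp [hA]

lemma indepP (Z R₀ R₁ Y₀ Y₁ : Ω → Bool) (hindep : IndepZ p Z R₀ R₁ Y₀ Y₁) (z : Bool)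
    (f : Bool → Bool → Bool → Bool → Prop) :
    Prob p (fun ω => Z ω = z ∧ f (R₀ ω) (R₁ ω) (Y₀ ω) (Y₁ ω)) =
      Prob p (fun ω => Z ω = z) * Prob p (fun ω => f (R₀ ω) (R₁ ω) (Y₀ ω) (Y₁ ω)) := by
  rw [Prob_decomp p R₀ R₁ Y₀ Y₁ (fun ω => Z ω = z) f]
  have hrhs : Prob p (fun ω => f (R₀ ω) (R₁ ω) (Y₀ ω) (Y₁ ω)) =
      ∑ v ∈ (Finset.univ : Finset (Bool × Bool × Bool × Bool)).filter
          (fun v => f v.1 v.2.1 v.2.2.1 v.2.2.2),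
        Prob p (fun ω => R₀ ω = v.1 ∧ R₁ ω = v.2.1 ∧ Y₀ ω = v.2.2.1 ∧ Y₁ ω = v.2.2.2) := by
    have h1 : Prob p (fun ω => f (R₀ ω) (R₁ ω) (Y₀ ω) (Y₁ ω)) =
        Prob p (fun ω => (fun _ : Ω => True) ω ∧ f (R₀ ω) (R₁ ω) (Y₀ ω) (Y₁ ω)) :=
      Prob_congr p _ _ (fun ω => by simp)
    rw [h1, Prob_decomp p R₀ R₁ Y₀ Y₁ (fun _ => True) f]
    apply Finset.sum_congr rfl
    intro v _
    exact Prob_congr p _ _ (fun ω => by simp)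
  rw [hrhs, Finset.mul_sum]
  apply Finset.sum_congr rfl
  intro v _
  exact hindep z v.1 v.2.1 v.2.2.1 v.2.2.2

lemma CExp_congr (f : Ω → ℝ) (B B' : Ω → Prop) (h : ∀ ω, B ω ↔ B' ω) :
    CExp p f B = CExp p f B' := by
  have : B = B' := funext fun ω => propext (h ω)
  rw [this]

lemma CExp_sub_ind (B : Ω → Prop) (R S : Ω → Bool) :
    CExp p (fun ω => ind (R ω) - ind (S ω)) B =
      (Prob p (fun ω => B ω ∧ R ω = true) - Prob p (fun ω => B ω ∧ S ω = true)) / Prob p B := by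
  unfold CExp
  congr 1
  have key : ∀ T : Ω → Bool, (∑ ω ∈ Finset.univ.filter B, p ω * ind (T ω)) =
      Prob p (fun ω => B ω ∧ T ω = true) := by
    intro T
    rw [Prob_eq_sum_ite, Finset.sum_filter]
    apply Finset.sum_congr rfl
    intro ω _
    by_cases hB : B ω
    · cases hT : T ω <;> simp [hB, hT, ind]
    · simp [hB]
  show (∑ ω ∈ Finset.univ.filter B, p ω * (ind (R ω) - ind (S ω))) = _
  have h2 : (∑ ω ∈ Finset.univ.filter B, p ω * (ind (R ω) - ind (S ω))) =
      (∑ ω ∈ Finset.univ.filter B, p ω * ind (R ω)) -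
      (∑ ω ∈ Finset.univ.filter B, p ω * ind (S ω)) := by
    rw [← Finset.sum_sub_distrib]
    apply Finset.sum_congr rfl
    intro ω _
    ring
  rw [h2, key R, key S]

end Aux

theorem stmt17 {Ω : Type*} [Fintype Ω] (p : Ω → ℝ) (Z R₀ R₁ Y₀ Y₁ : Ω → Bool)
    (hp : ∀ ω, 0 ≤ p ω) (hsum : ∑ ω, p ω = 1)
    (hZpos : ∀ z : Bool, 0 < Prob p (fun ω => Z ω = z))
    (hindep : IndepZ p Z R₀ R₁ Y₀ Y₁)
    (hmono : ∀ ω, Y₀ ω = true → Y₁ ω = true)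
    (hAH : 0 < Prob p (fun ω => Y₀ ω = true))
    (hmaxpos : 0 < max (CProb p (fun ω => obsY (obsR Z R₀ R₁) Y₀ Y₁ ω = true ∧ obsR Z R₀ R₁ ω = false) (fun ω => Z ω = true)) (CProb p (fun ω => obsY (obsR Z R₀ R₁) Y₀ Y₁ ω = true ∧ obsR Z R₀ R₁ ω = false) (fun ω => Z ω = false)))
    (hminpos : 0 < min (CProb p (fun ω => obsY (obsR Z R₀ R₁) Y₀ Y₁ ω = true) (fun ω => Z ω = true)) (CProb p (fun ω => obsY (obsR Z R₀ R₁) Y₀ Y₁ ω = true) (fun ω => Z ω = false)))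
    (hN : 0 ≤ (CProb p (fun ω => obsY (obsR Z R₀ R₁) Y₀ Y₁ ω = true ∧ obsR Z R₀ R₁ ω = false) (fun ω => Z ω = false) - CProb p (fun ω => obsY (obsR Z R₀ R₁) Y₀ Y₁ ω = true ∧ obsR Z R₀ R₁ ω = false) (fun ω => Z ω = true))) :
    Prob p (fun ω => Y₀ ω = true) ≤ min (CProb p (fun ω => obsY (obsR Z R₀ R₁) Y₀ Y₁ ω = true) (fun ω => Z ω = true)) (CProb p (fun ω => obsY (obsR Z R₀ R₁) Y₀ Y₁ ω = true) (fun ω => Z ω = false)) ∧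
    max (CProb p (fun ω => obsY (obsR Z R₀ R₁) Y₀ Y₁ ω = true ∧ obsR Z R₀ R₁ ω = false) (fun ω => Z ω = true)) (CProb p (fun ω => obsY (obsR Z R₀ R₁) Y₀ Y₁ ω = true ∧ obsR Z R₀ R₁ ω = false) (fun ω => Z ω = false)) ≤ Prob p (fun ω => Y₀ ω = true) ∧
    (CProb p (fun ω => obsY (obsR Z R₀ R₁) Y₀ Y₁ ω = true ∧ obsR Z R₀ R₁ ω = false) (fun ω => Z ω = false) - CProb p (fun ω => obsY (obsR Z R₀ R₁) Y₀ Y₁ ω = true ∧ obsR Z R₀ R₁ ω = false) (fun ω => Z ω = true)) / (min (CProb p (fun ω => obsY (obsR Z R₀ R₁) Y₀ Y₁ ω = true) (fun ω => Z ω = true)) (CProb p (fun ω => obsY (obsR Z R₀ R₁) Y₀ Y₁ ω = true) (fun ω => Z ω = false))) ≤ CExp p (fun ω => ind (R₁ ω) - ind (R₀ ω)) (fun ω => Y₀ ω = true ∧ Y₁ ω = true) ∧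
    CExp p (fun ω => ind (R₁ ω) - ind (R₀ ω)) (fun ω => Y₀ ω = true ∧ Y₁ ω = true) ≤ (CProb p (fun ω => obsY (obsR Z R₀ R₁) Y₀ Y₁ ω = true ∧ obsR Z R₀ R₁ ω = false) (fun ω => Z ω = false) - CProb p (fun ω => obsY (obsR Z R₀ R₁) Y₀ Y₁ ω = true ∧ obsR Z R₀ R₁ ω = false) (fun ω => Z ω = true)) / (max (CProb p (fun ω => obsY (obsR Z R₀ R₁) Y₀ Y₁ ω = true ∧ obsR Z R₀ R₁ ω = false) (fun ω => Z ω = true)) (CProb p (fun ω => obsY (obsR Z R₀ R₁) Y₀ Y₁ ω = true ∧ obsR Z R₀ R₁ ω = false) (fun ω => Z ω = false))) := by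
  classical
  -- P(Y=1 | Z=z) = P(Y_{R_z} = 1)
  have hYz : ∀ z : Bool, CProb p (fun ω => obsY (obsR Z R₀ R₁) Y₀ Y₁ ω = true) (fun ω => Z ω = z)
      = Prob p (fun ω => (if (if z then R₁ ω else R₀ ω) then Y₁ ω else Y₀ ω) = true) := by
    intro z
    unfold CProb
    have h1 : Prob p (fun ω => obsY (obsR Z R₀ R₁) Y₀ Y₁ ω = true ∧ Z ω = z) =
        Prob p (fun ω => Z ω = z ∧
          (fun a b c d => (if (if z then b else a) then d else c) = true)
            (R₀ ω) (R₁ ω) (Y₀ ω) (Y₁ ω)) := by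
      apply Prob_congr
      intro ω
      simp only [obsY, obsR]
      constructor
      · rintro ⟨hy, hz⟩
        simp only [hz] at hy
        exact ⟨hz, hy⟩
      · rintro ⟨hz, hy⟩
        refine ⟨?_, hz⟩
        simp only [hz]
        exact hy
    rw [h1, indepP p Z R₀ R₁ Y₀ Y₁ hindep z
      (fun a b c d => (if (if z then b else a) then d else c) = true),
      mul_comm, mul_div_assoc, div_self (hZpos z).ne', mul_one]
  -- P(Y=1, R=0 | Z=z) = P(Y₀=1, R_z=0)
  have hYRz : ∀ z : Bool, CProb p
      (fun ω => obsY (obsR Z R₀ R₁) Y₀ Y₁ ω = true ∧ obsR Z R₀ R₁ ω = false) (fun ω => Z ω = z)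
      = Prob p (fun ω => Y₀ ω = true ∧ (if z then R₁ ω else R₀ ω) = false) := by
    intro z
    unfold CProb
    have h1 : Prob p (fun ω =>
        (obsY (obsR Z R₀ R₁) Y₀ Y₁ ω = true ∧ obsR Z R₀ R₁ ω = false) ∧ Z ω = z) =
        Prob p (fun ω => Z ω = z ∧
          (fun a b c d => c = true ∧ (if z then b else a) = false)
            (R₀ ω) (R₁ ω) (Y₀ ω) (Y₁ ω)) := by
      apply Prob_congr
      intro ω
      simp only [obsY, obsR]
      constructor
      · rintro ⟨⟨hy, hr⟩, hz⟩
        simp only [hz] at hy hr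
        simp only [hr] at hy
        refine ⟨hz, by simpa using hy, hr⟩
      · rintro ⟨hz, hy, hr⟩
        refine ⟨⟨?_, ?_⟩, hz⟩
        · simp only [hz, hr]
          simpa using hy
        · simp only [hz]
          exact hr
    rw [h1, indepP p Z R₀ R₁ Y₀ Y₁ hindep z
      (fun a b c d => c = true ∧ (if z then b else a) = false),
      mul_comm, mul_div_assoc, div_self (hZpos z).ne', mul_one]
  -- min bound
  have hmin' : ∀ z : Bool, Prob p (fun ω => Y₀ ω = true) ≤
      CProb p (fun ω => obsY (obsR Z R₀ R₁) Y₀ Y₁ ω = true) (fun ω => Z ω = z) := by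
    intro z
    rw [hYz z]
    apply Prob_mono p hp
    intro ω h
    cases hsel : (if z then R₁ ω else R₀ ω)
    · simpa using h
    · simpa using hmono ω h
  -- max bound
  have hmax' : ∀ z : Bool, CProb p
      (fun ω => obsY (obsR Z R₀ R₁) Y₀ Y₁ ω = true ∧ obsR Z R₀ R₁ ω = false) (fun ω => Z ω = z)
      ≤ Prob p (fun ω => Y₀ ω = true) := by
    intro z
    rw [hYRz z]
    exact Prob_mono p hp _ _ (fun ω h => h.1)
  -- numerator identity
  have hif1 : ∀ ω : Ω, (if (true : Bool) then R₁ ω else R₀ ω) = R₁ ω := fun ω => rfl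
  have hif0 : ∀ ω : Ω, (if (false : Bool) then R₁ ω else R₀ ω) = R₀ ω := fun ω => rfl
  have hYR1 : CProb p
      (fun ω => obsY (obsR Z R₀ R₁) Y₀ Y₁ ω = true ∧ obsR Z R₀ R₁ ω = false)
      (fun ω => Z ω = true) = Prob p (fun ω => Y₀ ω = true ∧ R₁ ω = false) := by
    rw [hYRz true]
    exact Prob_congr p _ _ (fun ω => by rw [hif1])
  have hYR0 : CProb p
      (fun ω => obsY (obsR Z R₀ R₁) Y₀ Y₁ ω = true ∧ obsR Z R₀ R₁ ω = false)
      (fun ω => Z ω = false) = Prob p (fun ω => Y₀ ω = true ∧ R₀ ω = false) := by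
    rw [hYRz false]
    exact Prob_congr p _ _ (fun ω => by rw [hif0])
  -- CExp computation
  have hD : Prob p (fun ω => Y₀ ω = true ∧ Y₁ ω = true) = Prob p (fun ω => Y₀ ω = true) :=
    Prob_congr p _ _ (fun ω => ⟨fun h => h.1, fun h => ⟨h, hmono ω h⟩⟩)
  have hsplitT : ∀ T : Ω → Bool, Prob p (fun ω => Y₀ ω = true ∧ T ω = true) =
      Prob p (fun ω => Y₀ ω = true) - Prob p (fun ω => Y₀ ω = true ∧ T ω = false) := by
    intro T
    have := Prob_split p (fun ω => Y₀ ω = true) T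
    linarith
  have hCExp : CExp p (fun ω => ind (R₁ ω) - ind (R₀ ω)) (fun ω => Y₀ ω = true ∧ Y₁ ω = true)
      = (Prob p (fun ω => Y₀ ω = true ∧ R₀ ω = false) -
          Prob p (fun ω => Y₀ ω = true ∧ R₁ ω = false)) / Prob p (fun ω => Y₀ ω = true) := by
    rw [CExp_congr p _ _ (fun ω => Y₀ ω = true)
        (fun ω => ⟨fun h => h.1, fun h => ⟨h, hmono ω h⟩⟩),
      CExp_sub_ind p (fun ω => Y₀ ω = true) R₁ R₀, hsplitT R₁, hsplitT R₀]
    ring_nf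
  have hDm : Prob p (fun ω => Y₀ ω = true) ≤
      min (CProb p (fun ω => obsY (obsR Z R₀ R₁) Y₀ Y₁ ω = true) (fun ω => Z ω = true))
        (CProb p (fun ω => obsY (obsR Z R₀ R₁) Y₀ Y₁ ω = true) (fun ω => Z ω = false)) :=
    le_min (hmin' true) (hmin' false)
  have hMD : max (CProb p (fun ω => obsY (obsR Z R₀ R₁) Y₀ Y₁ ω = true ∧ obsR Z R₀ R₁ ω = false)
        (fun ω => Z ω = true))
      (CProb p (fun ω => obsY (obsR Z R₀ R₁) Y₀ Y₁ ω = true ∧ obsR Z R₀ R₁ ω = false)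
        (fun ω => Z ω = false)) ≤ Prob p (fun ω => Y₀ ω = true) :=
    max_le (hmax' true) (hmax' false)
  have hNn : 0 ≤ Prob p (fun ω => Y₀ ω = true ∧ R₀ ω = false) -
      Prob p (fun ω => Y₀ ω = true ∧ R₁ ω = false) := by
    rw [← hYR0, ← hYR1]; exact hN
  refine ⟨hDm, hMD, ?_, ?_⟩
  · rw [hCExp, hYR0, hYR1]
    exact div_le_div_of_nonneg_left hNn hAH hDm
  · rw [hYR0, hYR1] at hmaxpos hMD
    rw [hCExp, hYR0, hYR1]
    exact div_le_div_of_nonneg_left hNn hmaxpos hMD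

end PS
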